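/- ∫₀^∞ ∫_{−z}^{z} dw/(1+2z+w²)² dz, computed as an iterated integral, equals 1. -/

import Mathlib

/-!
Write `a = √(1 + 2z)`, so that `a² + z² = (1 + z)²`. The elementary primitive of
`(a² + w²)⁻²` gives the inner integral as `z / (a² (1 + z)²) + arctan (z / a) / a³`, and this
is the derivative of `G z = -(1 + z)⁻¹ - arctan (z / a) / a`. Since the inner integral is
nonnegative and `G` tends to `0` at infinity, the outer integral is `0 - G 0 = 1`.
-/

open MeasureTheory Real Filter Topology

theorem hasDerivAt_primitive_inv_sq_add_sq_sq {a : ℝ} (ha : 0 < a) (w : ℝ) :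
    HasDerivAt (fun w => w / (2 * a ^ 2 * (a ^ 2 + w ^ 2)) + arctan (w / a) / (2 * a ^ 3))
      ((a ^ 2 + w ^ 2) ^ 2)⁻¹ w := by
  have hq : HasDerivAt (fun w => 2 * a ^ 2 * (a ^ 2 + w ^ 2)) (2 * a ^ 2 * (2 * w)) w := by
    simpa using ((hasDerivAt_pow 2 w).const_add (a ^ 2)).const_mul (2 * a ^ 2)
  have hrat := (hasDerivAt_id' w).div hq (by positivity)
  have harc := ((hasDerivAt_arctan (w / a)).comp w ((hasDerivAt_id' w).div_const a)).div_const
    (2 * a ^ 3)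
  refine (hrat.add harc).congr_deriv ?_
  field_simp
  ring

theorem integral_neg_self_inv_sq_add_sq_sq {a : ℝ} (ha : 0 < a) (z : ℝ) :
    ∫ w in (-z)..z, ((a ^ 2 + w ^ 2) ^ 2)⁻¹ =
      z / (a ^ 2 * (a ^ 2 + z ^ 2)) + arctan (z / a) / a ^ 3 := by
  have hcont : Continuous fun w : ℝ => ((a ^ 2 + w ^ 2) ^ 2)⁻¹ :=
    (by fun_prop : Continuous fun w : ℝ => (a ^ 2 + w ^ 2) ^ 2).inv₀ fun w => by positivity
  rw [intervalIntegral.integral_eq_sub_of_hasDerivAt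
    (fun w _ => hasDerivAt_primitive_inv_sq_add_sq_sq ha w) (hcont.intervalIntegrable _ _),
    neg_div, neg_div, arctan_neg]
  field_simp
  ring

theorem hasDerivAt_sqrt_one_add_two_mul {z : ℝ} (hz : 0 < 1 + 2 * z) :
    HasDerivAt (fun z => √(1 + 2 * z)) (√(1 + 2 * z))⁻¹ z := by
  have hlin : HasDerivAt (fun z : ℝ => 1 + 2 * z) 2 z := by
    simpa using ((hasDerivAt_id z).const_mul 2).const_add 1
  refine ((hasDerivAt_sqrt hz.ne').comp z hlin).congr_deriv ?_
  field_simp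

theorem hasDerivAt_arctan_div_sqrt_one_add_two_mul {z : ℝ} (hz : 0 < 1 + 2 * z) :
    HasDerivAt (fun z => arctan (z / √(1 + 2 * z))) ((1 + z) * √(1 + 2 * z))⁻¹ z := by
  have hs : 0 < √(1 + 2 * z) := sqrt_pos.2 hz
  have hsq : √(1 + 2 * z) ^ 2 = 1 + 2 * z := sq_sqrt hz.le
  have h1z : 0 < 1 + z := by linarith
  refine ((hasDerivAt_arctan _).comp z
    ((hasDerivAt_id z).div (hasDerivAt_sqrt_one_add_two_mul hz) hs.ne')).congr_deriv ?_
  simp only [Pi.div_apply, id]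
  set s := √(1 + 2 * z)
  field_simp
  linear_combination z * hsq

noncomputable def innerIntegralAntideriv (z : ℝ) : ℝ :=
  -(1 + z)⁻¹ - arctan (z / √(1 + 2 * z)) / √(1 + 2 * z)

theorem hasDerivAt_innerIntegralAntideriv {z : ℝ} (hz : 0 ≤ z) :
    HasDerivAt innerIntegralAntideriv (∫ w in (-z)..z, ((1 + 2 * z + w ^ 2) ^ 2)⁻¹) z := by
  have h : 0 < 1 + 2 * z := by linarith
  have hs : 0 < √(1 + 2 * z) := sqrt_pos.2 h
  have hsq : √(1 + 2 * z) ^ 2 = 1 + 2 * z := sq_sqrt h.le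
  have h1z : 0 < 1 + z := by linarith
  rw [← hsq, integral_neg_self_inv_sq_add_sq_sq hs]
  refine ((((hasDerivAt_id' z).const_add 1).inv h1z.ne').neg.sub
    ((hasDerivAt_arctan_div_sqrt_one_add_two_mul h).div
      (hasDerivAt_sqrt_one_add_two_mul h) hs.ne')).congr_deriv ?_
  set s := √(1 + 2 * z)
  have hsz : s ^ 2 + z ^ 2 = (1 + z) ^ 2 := by rw [hsq]; ring
  rw [hsz]
  field_simp
  linear_combination s * hsq

theorem tendsto_innerIntegralAntideriv_atTop :
    Tendsto innerIntegralAntideriv atTop (𝓝 0) := by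
  have hs : Tendsto (fun z : ℝ => √(1 + 2 * z)) atTop atTop :=
    tendsto_sqrt_atTop.comp (tendsto_atTop_add_const_left _ 1 (tendsto_id.const_mul_atTop two_pos))
  have harctan_bdd : ∀ x, ‖arctan x‖ ≤ π / 2 := fun x =>
    (abs_lt.2 ⟨neg_pi_div_two_lt_arctan x, arctan_lt_pi_div_two x⟩).le
  have hquot : Tendsto (fun z : ℝ => arctan (z / √(1 + 2 * z)) * (√(1 + 2 * z))⁻¹) atTop (𝓝 0) :=
    isBoundedUnder_le_mul_tendsto_zero (isBoundedUnder_of ⟨π / 2, fun z => harctan_bdd _⟩)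
      (tendsto_inv_atTop_zero.comp hs)
  have hinv : Tendsto (fun z : ℝ => (1 + z)⁻¹) atTop (𝓝 0) :=
    (tendsto_atTop_add_const_left _ 1 tendsto_id).inv_tendsto_atTop
  have hsum := hinv.neg.sub hquot
  rw [neg_zero, sub_zero] at hsum
  exact hsum.congr fun z => by simp only [innerIntegralAntideriv, div_eq_mul_inv]

/-- ∫₀^∞ ∫_{−z}^{z} dw/(1+2z+w²)² dz = 1 as an iterated integral. -/
theorem iterated_integral_charge :
    ∫ z in Set.Ioi (0 : ℝ), (∫ w in (-z)..z, ((1 + 2 * z + w ^ 2) ^ 2)⁻¹) = 1 := by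
  rw [integral_Ioi_of_hasDerivAt_of_nonneg' (fun z hz => hasDerivAt_innerIntegralAntideriv hz)
    (fun z hz => intervalIntegral.integral_nonneg (neg_le_self (le_of_lt hz))
      (fun w _ => by positivity)) tendsto_innerIntegralAntideriv_atTop]
  norm_num [innerIntegralAntideriv]
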